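/- Let Q(x) = x^5 + 2x^3 + 3. Then (1/n) Σ_{i=1}^{n} ν_3(Q(i)) tends to 4/3 as n → ∞. -/

import Mathlib

/-!
Modulo 3 every residue is a root of `Q = X^5 + 2X^3 + 3`, since `x^5 ≡ x^3 ≡ x`. Modulo 9 there are
exactly two roots, both prime to 3, where `Q' = 5X^4 + 6X^2 ≡ 2` is a unit; by Hensel's lemma `Q`
has exactly two roots modulo `3^k` for every `k ≥ 2`. Writing `ν₃(Q i)` as the number of `k ≥ 1`
with `3^k ∣ Q i`, the `i ≤ n` in the `k`-th layer are counted by periodicity, giving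
`n * (1 + ∑_{k ≥ 2} 2 / 3^k) = 4n/3` up to an error of `O(1)` per layer; only `O(log n)`
layers are nonempty.
-/

open Filter

open Finset Polynomial

namespace Nat

variable {P : ℕ → Prop} [DecidablePred P] {m : ℕ}

theorem card_filter_Ico_add_mul (hP : Function.Periodic P m) (a q : ℕ) :
    #{x ∈ Ico a (a + q * m) | P x} = q * m.count P := by
  induction q with
  | zero => simp
  | succ q ih =>
    rw [add_mul, one_mul, ← add_assoc,
      ← Ico_union_Ico_eq_Ico (b := a + q * m) (by omega) (by omega), filter_union,
      card_union_of_disjoint (disjoint_filter_filter (Ico_disjoint_Ico_consecutive _ _ _)), ih,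
      filter_Ico_card_eq_of_periodic _ _ _ hP, add_mul, one_mul]

theorem mul_count_le_card_filter_Ico (hP : Function.Periodic P m) (a N : ℕ) :
    N / m * m.count P ≤ #{x ∈ Ico a (a + N) | P x} := by
  rw [← card_filter_Ico_add_mul hP]
  exact card_le_card (filter_subset_filter _ (Ico_subset_Ico_right (by
    have := Nat.div_mul_le_self N m; omega)))

theorem card_filter_Ico_le (hm : 0 < m) (hP : Function.Periodic P m) (a N : ℕ) :
    #{x ∈ Ico a (a + N) | P x} ≤ (N / m + 1) * m.count P := by
  rw [← card_filter_Ico_add_mul hP]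
  exact card_le_card (filter_subset_filter _ (Ico_subset_Ico_right (by
    have := Nat.div_add_mod N m; have := Nat.mod_lt N hm; nlinarith)))

theorem abs_card_filter_Ico_sub_le (hm : 0 < m) (hP : Function.Periodic P m) (a N : ℕ) :
    |(#{x ∈ Ico a (a + N) | P x} : ℝ) - N * (m.count P / m)| ≤ m.count P := by
  have hfloor : ((N / m : ℕ) : ℝ) ≤ N / m ∧ (N / m : ℝ) < (N / m : ℕ) + 1 := by
    rw [← Nat.floor_div_eq_div (K := ℝ)]
    exact ⟨Nat.floor_le (by positivity), Nat.lt_floor_add_one _⟩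
  have hlo : ((N / m : ℕ) : ℝ) * m.count P ≤ #{x ∈ Ico a (a + N) | P x} := by
    exact_mod_cast mul_count_le_card_filter_Ico hP a N
  have hhi : (#{x ∈ Ico a (a + N) | P x} : ℝ) ≤ ((N / m : ℕ) + 1) * m.count P := by
    exact_mod_cast card_filter_Ico_le hm hP a N
  have hc : (0 : ℝ) ≤ m.count P := Nat.cast_nonneg _
  rw [abs_le, ← mul_div_assoc, mul_div_right_comm]
  constructor <;> nlinarith

end Nat

namespace Int

theorem exists_lt_dvd_add_mul {p : ℕ} (hp : p.Prime) (c : ℤ) {d : ℤ} (hd : ¬ (p : ℤ) ∣ d) :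
    ∃ t < p, (p : ℤ) ∣ c + d * t := by
  have := Fact.mk hp
  have hd' : (d : ZMod p) ≠ 0 := by rwa [Ne, ZMod.intCast_zmod_eq_zero_iff_dvd]
  refine ⟨(-(c : ZMod p) / d).val, ZMod.val_lt _, ?_⟩
  rw [← ZMod.intCast_zmod_eq_zero_iff_dvd]
  push_cast
  rw [ZMod.natCast_val, ZMod.cast_id', id, mul_div_cancel₀ _ hd', add_neg_cancel]

end Int

namespace Polynomial

theorem sq_dvd_eval_add_sub {R : Type*} [CommRing R] (f : R[X]) (x y : R) :
    y ^ 2 ∣ f.eval (x + y) - (f.eval x + f.derivative.eval x * y) := by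
  obtain ⟨z, hz⟩ := f.binomExpansion x y
  exact ⟨z, by rw [hz]; ring⟩

theorem dvd_eval_iff_of_modEq (f : ℤ[X]) {m a b : ℤ} (h : a ≡ b [ZMOD m]) :
    m ∣ f.eval a ↔ m ∣ f.eval b := by
  have hab : m ∣ f.eval b - f.eval a := h.dvd.trans (sub_dvd_eval_sub b a f)
  constructor
  · intro ha; simpa using dvd_add ha hab
  · intro hb; simpa using dvd_sub hb hab

def numRootsMod (f : ℤ[X]) (m : ℕ) : ℕ :=
  m.count fun x => (m : ℤ) ∣ f.eval (x : ℤ)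

theorem periodic_dvd_eval (f : ℤ[X]) (m : ℕ) :
    Function.Periodic (fun x : ℕ => (m : ℤ) ∣ f.eval (x : ℤ)) m := fun x =>
  propext <| by push_cast; exact dvd_eval_iff_of_modEq f Int.add_modEq_right

theorem pow_succ_dvd_eval_add_mul_pow_iff (f : ℤ[X]) {p x c s : ℤ} {k : ℕ} (hp : p ≠ 0)
    (hk : 1 ≤ k) (hc : f.eval x = p ^ k * c) :
    p ^ (k + 1) ∣ f.eval (x + s * p ^ k) ↔ p ∣ c + f.derivative.eval x * s := by
  obtain ⟨z, hz⟩ := sq_dvd_eval_add_sub f x (s * p ^ k)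
  obtain ⟨j, rfl⟩ : ∃ j, k = j + 1 := ⟨k - 1, by omega⟩
  have hsplit : f.eval (x + s * p ^ (j + 1)) =
      p ^ (j + 1) * (c + f.derivative.eval x * s) + p ^ (j + 1 + 1) * (s ^ 2 * p ^ j * z) := by
    linear_combination hz + hc
  rw [hsplit, dvd_add_left (dvd_mul_right _ _), pow_succ _ (j + 1),
    mul_dvd_mul_iff_left (pow_ne_zero _ hp)]

variable {f : ℤ[X]} {p k : ℕ}

theorem exists_lt_pow_succ_dvd_eval (hp : p.Prime) (hk : 1 ≤ k) {r : ℕ}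
    (hr : (p : ℤ) ^ k ∣ f.eval (r : ℤ)) (hd : ¬ (p : ℤ) ∣ f.derivative.eval (r : ℤ)) :
    ∃ t < p, (p : ℤ) ^ (k + 1) ∣ f.eval ((r + t * p ^ k : ℕ) : ℤ) := by
  obtain ⟨c, hc⟩ := hr
  obtain ⟨t, ht, hdvd⟩ := Int.exists_lt_dvd_add_mul hp c hd
  refine ⟨t, ht, ?_⟩
  push_cast
  exact (pow_succ_dvd_eval_add_mul_pow_iff f (by exact_mod_cast hp.ne_zero) hk hc).mpr hdvd

theorem eq_of_pow_succ_dvd_eval (hp : p.Prime) (hk : 1 ≤ k) {x y : ℕ}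
    (hx : x < p ^ (k + 1)) (hy : y < p ^ (k + 1))
    (hfx : (p : ℤ) ^ (k + 1) ∣ f.eval (x : ℤ)) (hfy : (p : ℤ) ^ (k + 1) ∣ f.eval (y : ℤ))
    (hd : ¬ (p : ℤ) ∣ f.derivative.eval (x : ℤ)) (hxy : x % p ^ k = y % p ^ k) : x = y := by
  obtain ⟨s, hs⟩ : (p : ℤ) ^ k ∣ y - x := by exact_mod_cast Nat.modEq_iff_dvd.mp hxy
  obtain ⟨c, hc⟩ := (pow_dvd_pow _ k.le_succ).trans hfx
  have hp0 : (p : ℤ) ≠ 0 := by exact_mod_cast hp.ne_zero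
  have hlift : (p : ℤ) ∣ c + f.derivative.eval (x : ℤ) * s := by
    rw [← pow_succ_dvd_eval_add_mul_pow_iff f hp0 hk hc]
    convert hfy using 2
    linear_combination -hs
  have hpc : (p : ℤ) ∣ c := by
    rwa [hc, pow_succ, mul_dvd_mul_iff_left (pow_ne_zero _ hp0)] at hfx
  obtain ⟨u, rfl⟩ := (Int.Prime.dvd_mul' hp ((dvd_add_right hpc).mp hlift)).resolve_left hd
  have hmod : x ≡ y [MOD p ^ (k + 1)] := Nat.modEq_iff_dvd.mpr ⟨u, by push_cast; rw [hs]; ring⟩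
  exact hmod.eq_of_lt_of_lt hx hy

/-- Hensel's lemma in counting form: reduction modulo `p ^ k` is a bijection from the roots
modulo `p ^ (k + 1)` onto the roots modulo `p ^ k`, as these are all simple. -/
theorem numRootsMod_pow_succ (hp : p.Prime) (hk : 1 ≤ k)
    (hsimple : ∀ x : ℕ, (p : ℤ) ^ k ∣ f.eval (x : ℤ) → ¬ (p : ℤ) ∣ f.derivative.eval (x : ℤ)) :
    numRootsMod f (p ^ (k + 1)) = numRootsMod f (p ^ k) := by
  have hpk : 0 < p ^ k := pow_pos hp.pos k
  have hroot : ∀ {x : ℕ}, (p : ℤ) ^ (k + 1) ∣ f.eval (x : ℤ) → (p : ℤ) ^ k ∣ f.eval (x : ℤ) :=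
    (pow_dvd_pow _ k.le_succ).trans
  simp only [numRootsMod, Nat.count_eq_card_filter_range, Nat.cast_pow]
  refine card_bij (fun x _ => x % p ^ k) ?_ ?_ ?_
  · intro x hx
    simp only [mem_filter, mem_range] at hx ⊢
    refine ⟨Nat.mod_lt _ hpk, ?_⟩
    rw [dvd_eval_iff_of_modEq f (by push_cast [Int.natCast_mod]; exact Int.mod_modEq _ _)]
    exact hroot hx.2
  · intro x hx y hy hxy
    simp only [mem_filter, mem_range] at hx hy
    exact eq_of_pow_succ_dvd_eval hp hk hx.1 hy.1 hx.2 hy.2 (hsimple x (hroot hx.2)) hxy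
  · intro r hr
    simp only [mem_filter, mem_range] at hr
    obtain ⟨t, ht, hlift⟩ := exists_lt_pow_succ_dvd_eval hp hk hr.2 (hsimple r hr.2)
    refine ⟨r + t * p ^ k, mem_filter.mpr ⟨mem_range.mpr ?_, hlift⟩, ?_⟩
    · calc r + t * p ^ k < (t + 1) * p ^ k := by linarith [hr.1]
        _ ≤ p * p ^ k := Nat.mul_le_mul_right _ ht
        _ = p ^ (k + 1) := (pow_succ' p k).symm
    · simp [Nat.add_mul_mod_self_right, Nat.mod_eq_of_lt hr.1]

end Polynomial

theorem sum_padicValInt_eq_sum_card {p M : ℕ} (hp : p.Prime) (s : Finset ℕ) (g : ℕ → ℤ)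
    (hg : ∀ i ∈ s, g i ≠ 0 ∧ (g i).natAbs < p ^ (M + 1)) :
    ∑ i ∈ s, padicValInt p (g i) = ∑ k ∈ Icc 1 M, #{i ∈ s | (p : ℤ) ^ k ∣ g i} := by
  have hval : ∀ i ∈ s, padicValInt p (g i) = #{k ∈ Icc 1 M | (p : ℤ) ^ k ∣ g i} := by
    intro i hi
    rw [padicValInt, ← Nat.factorization_def _ hp, Nat.factorization_eq_card_pow_dvd_of_lt hp
      (Int.natAbs_pos.mpr (hg i hi).1) (hg i hi).2, Ico_add_one_right_eq_Icc]
    simp only [← Nat.cast_pow, Int.natCast_dvd]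
  rw [sum_congr rfl hval]
  simp only [card_filter]
  exact sum_comm

noncomputable def Q : ℤ[X] := X ^ 5 + 2 * X ^ 3 + 3

theorem eval_Q (x : ℤ) : Q.eval x = x ^ 5 + 2 * x ^ 3 + 3 := by simp [Q]

theorem eval_derivative_Q (x : ℤ) : Q.derivative.eval x = 5 * x ^ 4 + 6 * x ^ 2 := by
  simp only [Q, derivative_add, derivative_mul, derivative_X_pow, derivative_ofNat, eval_add,
    eval_mul, eval_pow, eval_X, eval_ofNat, eval_C, eval_zero]
  ring

theorem numRootsMod_Q_three : numRootsMod Q 3 = 3 := by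
  simp only [numRootsMod, eval_Q]; decide

theorem numRootsMod_Q_nine : numRootsMod Q (3 ^ 2) = 2 := by
  simp only [numRootsMod, eval_Q]; decide

theorem not_three_dvd_eval_derivative_Q {x : ℕ} (h : (3 : ℤ) ^ 2 ∣ Q.eval (x : ℤ)) :
    ¬ (3 : ℤ) ∣ Q.derivative.eval (x : ℤ) := by
  have hmod : ((x % 9 : ℕ) : ℤ) ≡ x [ZMOD 3 * 3] := by
    push_cast [Int.natCast_mod]; exact Int.mod_modEq _ _
  rw [← dvd_eval_iff_of_modEq Q (by simpa using hmod), eval_Q] at h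
  rw [← dvd_eval_iff_of_modEq _ (hmod.of_mul_left 3), eval_derivative_Q]
  have hsmall : ∀ r : ℕ, r < 9 → (3 : ℤ) ^ 2 ∣ (r : ℤ) ^ 5 + 2 * r ^ 3 + 3 →
      ¬ (3 : ℤ) ∣ 5 * (r : ℤ) ^ 4 + 6 * r ^ 2 := by decide
  exact hsmall _ (Nat.mod_lt _ (by norm_num)) h

theorem numRootsMod_Q_pow {k : ℕ} (hk : 2 ≤ k) : numRootsMod Q (3 ^ k) = 2 := by
  induction k, hk using Nat.le_induction with
  | base => exact numRootsMod_Q_nine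
  | succ k hk ih =>
    rw [numRootsMod_pow_succ Nat.prime_three (by omega) fun x hx =>
      not_three_dvd_eval_derivative_Q ((pow_dvd_pow 3 hk).trans (by exact_mod_cast hx)), ih]

theorem sum_numRootsMod_Q_div {M : ℕ} (hM : 1 ≤ M) :
    ∑ k ∈ Icc 1 M, (numRootsMod Q (3 ^ k) : ℝ) / 3 ^ k = 4 / 3 - 1 / 3 ^ M := by
  induction M, hM using Nat.le_induction with
  | base => norm_num [numRootsMod_Q_three]
  | succ M hM ih =>
    rw [sum_Icc_succ_top (by omega), ih, numRootsMod_Q_pow (by omega)]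
    field_simp
    ring

theorem numRootsMod_Q_le {k : ℕ} (hk : 1 ≤ k) : numRootsMod Q (3 ^ k) ≤ 3 := by
  rcases hk.eq_or_lt with rfl | hk
  · exact numRootsMod_Q_three.le
  · rw [numRootsMod_Q_pow hk]; norm_num

theorem abs_sum_padicValInt_eval_Q_sub_le {n M : ℕ} (hM : 1 ≤ M)
    (hn : n ^ 5 + 2 * n ^ 3 + 3 < 3 ^ (M + 1)) :
    |∑ i ∈ Icc 1 n, (padicValInt 3 (Q.eval (i : ℤ)) : ℝ) - n * (4 / 3 - 1 / 3 ^ M)| ≤ 3 * M := by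
  have hlayers : ∑ i ∈ Icc 1 n, (padicValInt 3 (Q.eval (i : ℤ)) : ℝ) =
      ∑ k ∈ Icc 1 M, (#{i ∈ Icc 1 n | (3 : ℤ) ^ k ∣ Q.eval ((i : ℕ) : ℤ)} : ℝ) := by
    have hQ : ∀ i ∈ Icc 1 n, Q.eval (i : ℤ) ≠ 0 ∧ (Q.eval (i : ℤ)).natAbs < 3 ^ (M + 1) := by
      intro i hi
      have hin : i ≤ n := (mem_Icc.mp hi).2
      have hQi : Q.eval (i : ℤ) = ((i ^ 5 + 2 * i ^ 3 + 3 : ℕ) : ℤ) := by push_cast [eval_Q]; rfl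
      rw [hQi, Int.natAbs_natCast]
      refine ⟨by positivity, lt_of_le_of_lt ?_ hn⟩
      gcongr
    simp only [← Nat.cast_sum]
    rw [sum_padicValInt_eq_sum_card Nat.prime_three _ _ hQ, Nat.cast_ofNat]
  have hlayer : ∀ k ∈ Icc 1 M, |(#{i ∈ Icc 1 n | (3 : ℤ) ^ k ∣ Q.eval ((i : ℕ) : ℤ)} : ℝ) -
      n * ((numRootsMod Q (3 ^ k) : ℝ) / 3 ^ k)| ≤ 3 := by
    intro k hk
    have h := Nat.abs_card_filter_Ico_sub_le (pow_pos three_pos k) (periodic_dvd_eval Q (3 ^ k)) 1 n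
    rw [← numRootsMod, add_comm, Ico_add_one_right_eq_Icc] at h
    simp only [Nat.cast_pow, Nat.cast_ofNat] at h
    have hle : (numRootsMod Q (3 ^ k) : ℝ) ≤ 3 := by
      exact_mod_cast numRootsMod_Q_le (mem_Icc.mp hk).1
    exact h.trans hle
  calc _ = |∑ k ∈ Icc 1 M, ((#{i ∈ Icc 1 n | (3 : ℤ) ^ k ∣ Q.eval ((i : ℕ) : ℤ)} : ℝ) -
        n * ((numRootsMod Q (3 ^ k) : ℝ) / 3 ^ k))| := by
        rw [hlayers, ← sum_numRootsMod_Q_div hM, mul_sum, sum_sub_distrib]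
    _ ≤ ∑ k ∈ Icc 1 M, (3 : ℝ) := (abs_sum_le_sum_abs _ _).trans (sum_le_sum hlayer)
    _ = 3 * M := by simp [mul_comm]

theorem natLog_eval_Q_le {n : ℕ} (hn : 1 ≤ n) :
    (Nat.log 3 (n ^ 5 + 2 * n ^ 3 + 3) : ℝ) ≤ 5 * (1 + Real.logb 3 n) := by
  have hn' : (1 : ℝ) ≤ n := by exact_mod_cast hn
  calc (Nat.log 3 (n ^ 5 + 2 * n ^ 3 + 3) : ℝ)
      ≤ Real.logb 3 ((n : ℝ) ^ 5 + 2 * n ^ 3 + 3) := by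
        have h := Real.natLog_le_logb (n ^ 5 + 2 * n ^ 3 + 3) 3
        push_cast at h
        exact h
    _ ≤ Real.logb 3 ((3 * n) ^ 5) := by
        apply Real.logb_le_logb_of_le (by norm_num) (by positivity)
        nlinarith [pow_le_pow_left₀ zero_le_one hn' 3,
          pow_le_pow_right₀ hn' (show 3 ≤ 5 by norm_num)]
    _ = 5 * (1 + Real.logb 3 n) := by
        rw [Real.logb_pow, Real.logb_mul (by norm_num) (by positivity),
          Real.logb_self_eq_one (by norm_num)]
        norm_num

theorem abs_sum_padicValInt_eval_Q_div_sub_le {n : ℕ} (hn : 1 ≤ n) :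
    |(∑ i ∈ Icc 1 n, (padicValInt 3 (Q.eval (i : ℤ)) : ℝ)) / n - 4 / 3| ≤
      3 * (Nat.log 3 (n ^ 5 + 2 * n ^ 3 + 3) + 1) / n := by
  set M := Nat.log 3 (n ^ 5 + 2 * n ^ 3 + 3)
  have hM : 1 ≤ M := Nat.log_pos (by norm_num) (by omega)
  have hlt : n ^ 5 + 2 * n ^ 3 + 3 < 3 ^ (M + 1) := Nat.lt_pow_succ_log_self (by norm_num) _
  have htail : (n : ℝ) / 3 ^ M ≤ 3 := by
    rw [div_le_iff₀ (by positivity)]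
    have : n < 3 * 3 ^ M := by
      rw [← pow_succ']; have := Nat.le_self_pow (by norm_num : 5 ≠ 0) n; omega
    exact_mod_cast this.le
  have hpos : (0 : ℝ) < n := by exact_mod_cast hn
  rw [div_sub' hpos.ne', abs_div, abs_of_pos hpos, div_le_div_iff_of_pos_right hpos]
  have hA := abs_le.mp (abs_sum_padicValInt_eval_Q_sub_le hM hlt)
  have hsplit : (n : ℝ) * (4 / 3 - 1 / 3 ^ M) = n * (4 / 3) - n / 3 ^ M := by ring
  have htail0 : (0 : ℝ) ≤ n / 3 ^ M := by positivity
  rw [abs_le]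
  constructor <;> linarith [hA.1, hA.2]

theorem val3_Q_asymptotic :
    Tendsto (fun n : ℕ =>
        (∑ i ∈ Finset.Icc 1 n, (padicValInt 3 ((i : ℤ) ^ 5 + 2 * i ^ 3 + 3) : ℝ)) / n)
      atTop (nhds (4 / 3)) := by
  have hlim : Tendsto (fun n : ℕ => (15 * Real.logb 3 n + 18) / n) atTop (nhds 0) := by
    have hlog := (Real.tendsto_pow_logb_div_mul_add_atTop (b := 3) 1 0 1 one_ne_zero).comp
      tendsto_natCast_atTop_atTop
    simpa [add_div, mul_div_assoc] using
      (hlog.const_mul 15).add (tendsto_const_div_atTop_nhds_zero_nat 18)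
  simp_rw [← eval_Q]
  rw [tendsto_iff_norm_sub_tendsto_zero]
  refine squeeze_zero' (Eventually.of_forall fun _ => norm_nonneg _) ?_ hlim
  filter_upwards [eventually_ge_atTop 1] with n hn
  refine (abs_sum_padicValInt_eval_Q_div_sub_le hn).trans ?_
  gcongr
  linarith [natLog_eval_Q_le hn]
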